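/- Cassini's identity 1: for all integers n ≥ 1, B_{k,n}² − B_{k,n−1}·B_{k,n+1} = (k−1)^{n−1}. -/
import Mathlib


def B (k : ℤ) : ℕ → ℤ
  | 0 => 0
  | 1 => 1
  | (n+2) => 3*k * B k (n+1) + (1-k) * B k n

theorem stmt15 (k : ℤ) (hk : 1 ≤ k) (n : ℕ) (hn : 1 ≤ n) :
    (B k n) ^ 2 - B k (n-1) * B k (n+1) = (k-1) ^ (n-1) := by
  induction n, hn using Nat.le_induction with
  | base => simp [B]
  | succ m hm ih =>
    obtain ⟨j, rfl⟩ : ∃ j, m = j + 1 := ⟨m - 1, by omega⟩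
    simp only [Nat.add_sub_cancel] at ih ⊢
    have ih' : B k (j+1) ^ 2 - B k j * B k (j+2) = (k-1)^j := ih
    have h1 : B k (j + 2) = 3*k * B k (j+1) + (1-k) * B k j := rfl
    have h3 : B k (j + 3) = 3*k * B k (j+2) + (1-k) * B k (j+1) := rfl
    show (B k (j+2))^2 - B k (j+1) * B k (j+3) = (k-1)^(j+1)
    linear_combination (-B k (j+1))*h3 + (B k (j+2))*h1 + (k-1)*ih'
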